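/- arXiv:2201.00176 — 2 statements merged into one kernel-verified Lean document; each statement's English description precedes it below -/
import Mathlib

section
/- Let m,n ≥ 1 and let Λ_{m,n} be the n-column by m-row box with domain wall boundary condition. Then the number of eight-vertex configurations with this boundary condition is |Δ^DW_8vx(Λ_{m,n})| = 0 if m+n is odd, and |Δ^DW_8vx(Λ_{m,n})| = 2^{(m−1)(n−1)} if m+n is even. -/
open scoped BigOperators

namespace Box

variable (m n : ℕ)

/-- Horizontal edges of the `n`-column, `m`-row box (including the horizontal
boundary edges): `(x, y)` with `x ∈ {0,…,n}`, `y ∈ {0,…,m-1}` is the edge from the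
lattice point `(x, y+1)` to `(x+1, y+1)`; `x = 0` and `x = n` index the horizontal
boundary edges. -/
abbrev EH (m n : ℕ) := Fin (n + 1) × Fin m

/-- Vertical edges of the box (including the vertical boundary edges): `(x, y)`
with `x ∈ {0,…,n-1}`, `y ∈ {0,…,m}` is the edge from the lattice point `(x+1, y)`
to `(x+1, y+1)`; `y = 0` and `y = m` index the vertical boundary edges. -/
abbrev EV (m n : ℕ) := Fin n × Fin (m + 1)

/-- Arrow configurations on the box: `true` means pointing right (resp. up). -/
abbrev BConf (m n : ℕ) := (EH m n → Bool) × (EV m n → Bool)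

/-- Which of the four edges at the vertex with coordinates `(x+1, y+1)` of the box
are incoming (in the order left, right, down, up). -/
def incVec (d : BConf m n) (x : Fin n) (y : Fin m) : Fin 4 → Bool :=
  ![d.1 (x.castSucc, y), !d.1 (x.succ, y), d.2 (x, y.castSucc), !d.2 (x, y.succ)]

/-- Every vertex of the box has an even number of incoming arrows. -/
def IsEightVertex (d : BConf m n) : Prop :=
  ∀ (x : Fin n) (y : Fin m),
    Even (Finset.univ.filter (fun i => incVec m n d x y i = true)).card

/-- The domain wall boundary condition: every horizontal boundary edge points into
the box and every vertical boundary edge points out of the box. -/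
def DWBC (d : BConf m n) : Prop :=
  (∀ y : Fin m, d.1 (0, y) = true) ∧ (∀ y : Fin m, d.1 (Fin.last n, y) = false) ∧
    (∀ x : Fin n, d.2 (x, 0) = false) ∧ (∀ x : Fin n, d.2 (x, Fin.last m) = true)

/-- The set `Δ^DW_8vx(Λ_{m,n})` of eight-vertex configurations on the box with
domain wall boundary conditions. -/
noncomputable def ΔDW : Finset (BConf m n) :=
  haveI := Classical.decPred fun d : BConf m n => DWBC m n d ∧ IsEightVertex m n d
  Finset.univ.filter fun d : BConf m n => DWBC m n d ∧ IsEightVertex m n d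

/-- The uniform probability measure `μ^DW` on `Δ^DW_8vx(Λ_{m,n})`. -/
noncomputable def probDW (P : BConf m n → Prop) : ℝ :=
  haveI := Classical.decPred P
  (((ΔDW m n).filter P).card : ℝ) / ((ΔDW m n).card : ℝ)

end Box

namespace DWProof

def e : Bool → ZMod 2 := fun b => if b then 1 else 0
def bOf : ZMod 2 → Bool := fun z => decide (z = 1)

lemma ebOf (z : ZMod 2) : e (bOf z) = z := by revert z; decide
lemma bOfe (b : Bool) : bOf (e b) = b := by revert b; decide
lemma h2 (c : ZMod 2) : c + c = 0 := by revert c; decide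

lemma zvx : ∀ a b c d : ZMod 2, a + b + c + d = 0 → b = a + c + d := by decide
lemma zrow : ∀ u v : ZMod 2, 0 = 1 + (u + v) → v = 1 + u := by decide
lemma zpar : ∀ u v : ZMod 2, u + 1 = v + 1 → u + v = 0 := by decide
lemma zmid : ∀ u v : ZMod 2, u + (v + u) = v := by decide
lemma zs1 : ∀ u : ZMod 2, u + (u + 1) = 1 := by decide
lemma zs2 : ∀ u v : ZMod 2, u + v = 0 → u + (v + 1) = 1 := by decide
lemma zvx2 : ∀ u v w : ZMod 2, u + (u + v + w) + v + w = 0 := by decide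
lemma zlast : ∀ s v u : ZMod 2, s + v = u → u + s = v := by decide

lemma parity4 (A B C D : Bool) :
    Even ((Finset.univ.filter (fun i => ![A, !B, C, !D] i = true)).card) ↔
      e A + e B + e C + e D = 0 := by revert A B C D; decide

lemma mem_ΔDW {m n : ℕ} (d : Box.BConf m n) :
    d ∈ Box.ΔDW m n ↔ Box.DWBC m n d ∧ ∀ (x : Fin n) (y : Fin m),
      e (d.1 (x.castSucc, y)) + e (d.1 (x.succ, y)) + e (d.2 (x, y.castSucc))
        + e (d.2 (x, y.succ)) = 0 := by
  unfold Box.ΔDW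
  rw [@Finset.mem_filter _ (fun d : Box.BConf m n => Box.DWBC m n d ∧ Box.IsEightVertex m n d)
    (Classical.decPred _) Finset.univ d]
  simp only [Finset.mem_univ, true_and]
  refine and_congr Iff.rfl ?_
  unfold Box.IsEightVertex Box.incVec
  exact forall_congr' fun x => forall_congr' fun y => parity4 _ _ _ _

lemma telescope (f g : ℕ → ZMod 2) (N : ℕ) (h : ∀ i < N, f (i + 1) = f i + g i) :
    f N = f 0 + ∑ i ∈ Finset.range N, g i := by
  induction N with
  | zero => simp
  | succ N ih =>
      rw [Finset.sum_range_succ, h N (by omega), ih (fun i hi => h i (by omega))]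
      ring

lemma Srec (S : ℕ → ZMod 2) (M : ℕ) (h0 : S 0 = 0)
    (h : ∀ y < M, S (y + 1) = 1 + S y) : ∀ y ≤ M, S y = (y : ZMod 2) := by
  intro y
  induction y with
  | zero => intro _; simpa using h0
  | succ y ih =>
      intro hy
      rw [h y (by omega), ih (by omega)]
      push_cast
      ring

section Config

variable (m' n' : ℕ)

/-- Vertical edge values of a configuration, as `ℕ`-indexed `ZMod 2` function. -/
def Vd (d : Box.BConf (m' + 1) (n' + 1)) (x y : ℕ) : ZMod 2 :=
  if h : x < n' + 1 ∧ y < m' + 2 then e (d.2 (⟨x, h.1⟩, ⟨y, h.2⟩)) else 0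

/-- Horizontal edge values. -/
def Hd (d : Box.BConf (m' + 1) (n' + 1)) (x y : ℕ) : ZMod 2 :=
  if h : x < n' + 2 ∧ y < m' + 1 then e (d.1 (⟨x, h.1⟩, ⟨y, h.2⟩)) else 0

variable {m' n'} {d : Box.BConf (m' + 1) (n' + 1)}

lemma Vd_eq {x y : ℕ} (h1 : x < n' + 1) (h2 : y < m' + 2) :
    Vd m' n' d x y = e (d.2 (⟨x, h1⟩, ⟨y, h2⟩)) := dif_pos ⟨h1, h2⟩

lemma Hd_eq {x y : ℕ} (h1 : x < n' + 2) (h2 : y < m' + 1) :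
    Hd m' n' d x y = e (d.1 (⟨x, h1⟩, ⟨y, h2⟩)) := dif_pos ⟨h1, h2⟩

lemma vertex_nat (hd : d ∈ Box.ΔDW (m' + 1) (n' + 1)) :
    ∀ x < n' + 1, ∀ y < m' + 1,
      Hd m' n' d (x + 1) y = Hd m' n' d x y + Vd m' n' d x y + Vd m' n' d x (y + 1) := by
  intro x hx y hy
  have h := ((mem_ΔDW d).1 hd).2 ⟨x, hx⟩ ⟨y, hy⟩
  rw [Hd_eq (by omega) hy, Hd_eq (by omega) hy, Vd_eq hx (by omega), Vd_eq hx (by omega)]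
  have e1 : (⟨x, by omega⟩ : Fin (n' + 2)) = Fin.castSucc ⟨x, hx⟩ := Fin.ext rfl
  have e2 : (⟨x + 1, by omega⟩ : Fin (n' + 2)) = Fin.succ ⟨x, hx⟩ := Fin.ext rfl
  have e3 : (⟨y, by omega⟩ : Fin (m' + 2)) = Fin.castSucc ⟨y, hy⟩ := Fin.ext rfl
  have e4 : (⟨y + 1, by omega⟩ : Fin (m' + 2)) = Fin.succ ⟨y, hy⟩ := Fin.ext rfl
  rw [e1, e2, e3, e4]
  exact zvx _ _ _ _ h

lemma dwbc_nat (hd : d ∈ Box.ΔDW (m' + 1) (n' + 1)) :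
    (∀ y < m' + 1, Hd m' n' d 0 y = 1) ∧ (∀ y < m' + 1, Hd m' n' d (n' + 1) y = 0) ∧
      (∀ x < n' + 1, Vd m' n' d x 0 = 0) ∧ (∀ x < n' + 1, Vd m' n' d x (m' + 1) = 1) := by
  obtain ⟨⟨b1, b2, b3, b4⟩, -⟩ := (mem_ΔDW d).1 hd
  refine ⟨fun y hy => ?_, fun y hy => ?_, fun x hx => ?_, fun x hx => ?_⟩
  · rw [Hd_eq (by omega) hy, show (⟨0, by omega⟩ : Fin (n' + 2)) = 0 from rfl,
      b1 ⟨y, hy⟩]; rfl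
  · rw [Hd_eq (by omega) hy, show (⟨n' + 1, by omega⟩ : Fin (n' + 2)) = Fin.last (n' + 1) from rfl,
      b2 ⟨y, hy⟩]; rfl
  · rw [Vd_eq hx (by omega), show (⟨0, by omega⟩ : Fin (m' + 2)) = 0 from rfl,
      b3 ⟨x, hx⟩]; rfl
  · rw [Vd_eq hx (by omega), show (⟨m' + 1, by omega⟩ : Fin (m' + 2)) = Fin.last (m' + 1) from rfl,
      b4 ⟨x, hx⟩]; rfl

/-- Horizontal edges are determined by the vertical ones. -/
lemma Hd_telescope (hd : d ∈ Box.ΔDW (m' + 1) (n' + 1)) :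
    ∀ x ≤ n' + 1, ∀ y < m' + 1,
      Hd m' n' d x y = 1 + ∑ i ∈ Finset.range x, (Vd m' n' d i y + Vd m' n' d i (y + 1)) := by
  intro x hx y hy
  have hmain : Hd m' n' d x y = Hd m' n' d 0 y
      + ∑ i ∈ Finset.range x, (Vd m' n' d i y + Vd m' n' d i (y + 1)) :=
    telescope (fun i => Hd m' n' d i y) (fun i => Vd m' n' d i y + Vd m' n' d i (y + 1)) x
      (fun i hi => by
        show Hd m' n' d (i + 1) y = Hd m' n' d i y + (Vd m' n' d i y + Vd m' n' d i (y + 1))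
        rw [vertex_nat hd i (by omega) y hy]; ring)
  rw [hmain, (dwbc_nat hd).1 y hy]

/-- Row sums of vertical edges. -/
def Sd (d : Box.BConf (m' + 1) (n' + 1)) (y : ℕ) : ZMod 2 :=
  ∑ i ∈ Finset.range (n' + 1), Vd m' n' d i y

lemma Sd_eq (hd : d ∈ Box.ΔDW (m' + 1) (n' + 1)) :
    ∀ y ≤ m' + 1, Sd d y = (y : ZMod 2) := by
  have key : ∀ y < m' + 1, Sd d (y + 1) = 1 + Sd d y := by
    intro y hy
    have h0 := (dwbc_nat hd).2.1 y hy
    have ht := Hd_telescope hd (n' + 1) le_rfl y hy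
    rw [h0, Finset.sum_add_distrib] at ht
    unfold Sd
    exact zrow _ _ ht
  have h0 : Sd d 0 = 0 := by
    unfold Sd
    refine Finset.sum_eq_zero fun i hi => ?_
    exact (dwbc_nat hd).2.2.1 i (Finset.mem_range.1 hi)
  exact Srec _ _ h0 key

lemma Sd_top (hd : d ∈ Box.ΔDW (m' + 1) (n' + 1)) :
    Sd d (m' + 1) = ((n' + 1 : ℕ) : ZMod 2) := by
  unfold Sd
  rw [Finset.sum_congr rfl fun i hi => (dwbc_nat hd).2.2.2 i (Finset.mem_range.1 hi)]
  simp

lemma parity_of_mem (hd : d ∈ Box.ΔDW (m' + 1) (n' + 1)) :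
    ((m' + n' : ℕ) : ZMod 2) = 0 := by
  have h1 := Sd_eq hd (m' + 1) le_rfl
  have h2' := Sd_top hd
  have h3 : ((m' + 1 : ℕ) : ZMod 2) = ((n' + 1 : ℕ) : ZMod 2) := by rw [← h1, h2']
  push_cast at h3 ⊢
  exact zpar _ _ h3

end Config


section Recon

variable (m' n' : ℕ)

def aZ (a : Fin m' × Fin n' → Bool) (j i : ℕ) : ZMod 2 :=
  if h : j < m' ∧ i < n' then e (a (⟨j, h.1⟩, ⟨i, h.2⟩)) else 0

def Vr (a : Fin m' × Fin n' → Bool) (x y : ℕ) : ZMod 2 :=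
  if y = 0 then 0
  else if y = m' + 1 then 1
  else if x < n' then aZ m' n' a (y - 1) x
  else (y : ZMod 2) + ∑ i ∈ Finset.range n', aZ m' n' a (y - 1) i

def Hr (a : Fin m' × Fin n' → Bool) (x y : ℕ) : ZMod 2 :=
  1 + ∑ i ∈ Finset.range x, (Vr m' n' a i y + Vr m' n' a i (y + 1))

def recon (a : Fin m' × Fin n' → Bool) : Box.BConf (m' + 1) (n' + 1) :=
  (fun p => bOf (Hr m' n' a p.1.val p.2.val), fun p => bOf (Vr m' n' a p.1.val p.2.val))

variable {m' n'} {a : Fin m' × Fin n' → Bool}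

lemma SVr0 : ∑ x ∈ Finset.range (n' + 1), Vr m' n' a x 0 = 0 :=
  Finset.sum_eq_zero fun i _ => if_pos rfl

lemma SVrtop : ∑ x ∈ Finset.range (n' + 1), Vr m' n' a x (m' + 1)
    = ((n' + 1 : ℕ) : ZMod 2) := by
  rw [Finset.sum_congr rfl fun i _ => show Vr m' n' a i (m' + 1) = 1 by
    unfold Vr; rw [if_neg (by omega), if_pos rfl]]
  simp

lemma SVrmid (y : ℕ) (h1 : 1 ≤ y) (h2' : y ≤ m') :
    ∑ x ∈ Finset.range (n' + 1), Vr m' n' a x y = (y : ZMod 2) := by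
  rw [Finset.sum_range_succ]
  have hmid : ∀ i < n', Vr m' n' a i y = aZ m' n' a (y - 1) i := by
    intro i hi
    unfold Vr
    rw [if_neg (by omega), if_neg (by omega), if_pos hi]
  have hlast : Vr m' n' a n' y = (y : ZMod 2) + ∑ i ∈ Finset.range n', aZ m' n' a (y - 1) i := by
    unfold Vr
    rw [if_neg (by omega), if_neg (by omega), if_neg (lt_irrefl n')]
  rw [hlast, Finset.sum_congr rfl fun i hi => hmid i (Finset.mem_range.1 hi)]
  exact zmid _ _

/-- The key row constraint, assuming parity. -/
lemma SVr_constraint (hpar : ((m' + n' : ℕ) : ZMod 2) = 0) (y : ℕ) (hy : y ≤ m') :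
    ∑ i ∈ Finset.range (n' + 1), (Vr m' n' a i y + Vr m' n' a i (y + 1)) = 1 := by
  rw [Finset.sum_add_distrib]
  rcases Nat.lt_or_ge y m' with h | h
  · rcases Nat.eq_zero_or_pos y with rfl | hy1
    · rw [SVr0, SVrmid 1 le_rfl (by omega)]
      simp
    · rw [SVrmid y hy1 (by omega), SVrmid (y + 1) (by omega) (by omega)]
      push_cast
      exact zs1 _
  · have hym : y = m' := le_antisymm hy h
    subst hym
    rcases Nat.eq_zero_or_pos y with rfl | hy1
    · rw [SVr0, SVrtop]
      have hn : (n' : ZMod 2) = 0 := by push_cast at hpar; simpa using hpar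
      push_cast
      rw [hn]
      norm_num
    · rw [SVrmid y hy1 le_rfl, SVrtop]
      push_cast at hpar ⊢
      exact zs2 _ _ hpar

lemma Hr_succ (x y : ℕ) :
    Hr m' n' a (x + 1) y = Hr m' n' a x y + Vr m' n' a x y + Vr m' n' a x (y + 1) := by
  unfold Hr
  rw [Finset.sum_range_succ]
  ring

lemma recon_mem (hpar : ((m' + n' : ℕ) : ZMod 2) = 0) :
    recon m' n' a ∈ Box.ΔDW (m' + 1) (n' + 1) := by
  rw [mem_ΔDW]
  constructor
  · refine ⟨fun y => ?_, fun y => ?_, fun x => ?_, fun x => ?_⟩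
    · show bOf (Hr m' n' a (0 : Fin (n' + 2)).val y.val) = true
      rw [show (0 : Fin (n' + 2)).val = 0 from rfl,
        show Hr m' n' a 0 y.val = 1 by unfold Hr; simp]
      decide
    · show bOf (Hr m' n' a (Fin.last (n' + 1)).val y.val) = false
      have hv : (Fin.last (n' + 1)).val = n' + 1 := rfl
      rw [hv]
      unfold Hr
      rw [SVr_constraint hpar y.val (by omega)]
      decide
    · show bOf (Vr m' n' a x.val (0 : Fin (m' + 2)).val) = false
      rw [show (0 : Fin (m' + 2)).val = 0 from rfl,
        show Vr m' n' a x.val 0 = 0 from if_pos rfl]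
      decide
    · show bOf (Vr m' n' a x.val (Fin.last (m' + 1)).val) = true
      have hv : (Fin.last (m' + 1)).val = m' + 1 := rfl
      rw [hv]
      unfold Vr
      rw [if_neg (by omega), if_pos rfl]
      decide
  · intro x y
    show e (bOf (Hr m' n' a x.val y.val)) + e (bOf (Hr m' n' a (x.val + 1) y.val))
        + e (bOf (Vr m' n' a x.val y.val)) + e (bOf (Vr m' n' a x.val (y.val + 1))) = 0
    rw [ebOf, ebOf, ebOf, ebOf, Hr_succ]
    exact zvx2 _ _ _

end Recon

section Main

variable {m' n' : ℕ}

/-- The forward map reading off the interior vertical edges. -/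
def fw (d : Box.BConf (m' + 1) (n' + 1)) : Fin m' × Fin n' → Bool :=
  fun p => d.2 (p.2.castSucc, p.1.succ.castSucc)

lemma fw_recon (a : Fin m' × Fin n' → Bool) : fw (recon m' n' a) = a := by
  funext p
  show bOf (Vr m' n' a (p.2.castSucc.val) (p.1.succ.castSucc.val)) = a p
  have h1 : p.2.castSucc.val = p.2.val := rfl
  have h2' : p.1.succ.castSucc.val = p.1.val + 1 := rfl
  rw [h1, h2']
  unfold Vr
  rw [if_neg (by omega), if_neg (by have := p.1.isLt; omega : ¬ p.1.val + 1 = m' + 1),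
    if_pos p.2.isLt]
  unfold aZ
  rw [dif_pos ⟨by have := p.1.isLt; omega, p.2.isLt⟩, bOfe]
  rfl

lemma Vr_fw {d : Box.BConf (m' + 1) (n' + 1)} (hd : d ∈ Box.ΔDW (m' + 1) (n' + 1)) :
    ∀ x < n' + 1, ∀ y < m' + 2, Vr m' n' (fw d) x y = Vd m' n' d x y := by
  intro x hx y hy
  rcases eq_or_ne y 0 with rfl | hy0
  · rw [show Vr m' n' (fw d) x 0 = 0 from if_pos rfl, (dwbc_nat hd).2.2.1 x hx]
  rcases eq_or_ne y (m' + 1) with rfl | hytop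
  · rw [show Vr m' n' (fw d) x (m' + 1) = 1 from by unfold Vr; rw [if_neg (by omega), if_pos rfl],
      (dwbc_nat hd).2.2.2 x hx]
  have hy1 : 1 ≤ y := by omega
  have hym : y ≤ m' := by omega
  have haz : ∀ i < n', aZ m' n' (fw d) (y - 1) i = Vd m' n' d i y := by
    intro i hi
    unfold aZ fw
    rw [dif_pos ⟨by omega, hi⟩, Vd_eq (by omega) hy]
    refine congrArg e (congrArg d.2 ?_)
    simp only [Prod.ext_iff, Fin.ext_iff, Fin.coe_castSucc, Fin.val_succ]
    exact ⟨trivial, by omega⟩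
  rcases Nat.lt_or_ge x n' with hxn | hxn
  · rw [show Vr m' n' (fw d) x y = aZ m' n' (fw d) (y - 1) x from by
      unfold Vr; rw [if_neg hy0, if_neg hytop, if_pos hxn]]
    exact haz x hxn
  · have hxe : x = n' := by omega
    rw [hxe]
    rw [show Vr m' n' (fw d) n' y = (y : ZMod 2) + ∑ i ∈ Finset.range n', aZ m' n' (fw d) (y - 1) i
        from by unfold Vr; rw [if_neg hy0, if_neg hytop, if_neg (lt_irrefl n')]]
    rw [Finset.sum_congr rfl fun i hi => haz i (Finset.mem_range.1 hi)]
    have hS := Sd_eq hd y (by omega)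
    unfold Sd at hS
    rw [Finset.sum_range_succ] at hS
    exact zlast _ _ _ hS

lemma Hr_fw {d : Box.BConf (m' + 1) (n' + 1)} (hd : d ∈ Box.ΔDW (m' + 1) (n' + 1)) :
    ∀ x < n' + 2, ∀ y < m' + 1, Hr m' n' (fw d) x y = Hd m' n' d x y := by
  intro x hx y hy
  unfold Hr
  rw [Finset.sum_congr rfl fun i hi => by
    rw [Vr_fw hd i (by have := Finset.mem_range.1 hi; omega) y (by omega),
      Vr_fw hd i (by have := Finset.mem_range.1 hi; omega) (y + 1) (by omega)]]
  rw [← Hd_telescope hd x (by omega) y hy]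

lemma recon_fw {d : Box.BConf (m' + 1) (n' + 1)} (hd : d ∈ Box.ΔDW (m' + 1) (n' + 1)) :
    recon m' n' (fw d) = d := by
  unfold recon
  ext p
  · show bOf (Hr m' n' (fw d) p.1.val p.2.val) = d.1 p
    rw [Hr_fw hd p.1.val p.1.isLt p.2.val p.2.isLt, Hd_eq p.1.isLt p.2.isLt]
    rw [show (⟨p.1.val, p.1.isLt⟩ : Fin (n' + 2)) = p.1 from Fin.eta _ _,
      show (⟨p.2.val, p.2.isLt⟩ : Fin (m' + 1)) = p.2 from Fin.eta _ _]
    exact bOfe _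
  · show bOf (Vr m' n' (fw d) p.1.val p.2.val) = d.2 p
    rw [Vr_fw hd p.1.val p.1.isLt p.2.val p.2.isLt, Vd_eq p.1.isLt p.2.isLt]
    rw [show (⟨p.1.val, p.1.isLt⟩ : Fin (n' + 1)) = p.1 from Fin.eta _ _,
      show (⟨p.2.val, p.2.isLt⟩ : Fin (m' + 2)) = p.2 from Fin.eta _ _]
    exact bOfe _

lemma card_even (hpar : ((m' + n' : ℕ) : ZMod 2) = 0) :
    (Box.ΔDW (m' + 1) (n' + 1)).card = 2 ^ (m' * n') := by
  classical
  have := Finset.card_bij' (s := Box.ΔDW (m' + 1) (n' + 1))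
    (t := (Finset.univ : Finset (Fin m' × Fin n' → Bool)))
    (fun d _ => fw d) (fun a _ => recon m' n' a)
    (fun d _ => Finset.mem_univ _) (fun a _ => recon_mem hpar)
    (fun d hd => recon_fw hd) (fun a _ => fw_recon a)
  rw [this, Finset.card_univ, Fintype.card_fun]
  simp

end Main

end DWProof


/-- The number of eight-vertex configurations on the `n`-column,
`m`-row box with domain wall boundary conditions is `0` if `m + n` is odd and
`2^{(m-1)(n-1)}` if `m + n` is even. -/
theorem domain_wall_count (m n : ℕ) (hm : 1 ≤ m) (hn : 1 ≤ n) :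
    (Odd (m + n) → (Box.ΔDW m n).card = 0) ∧
      (Even (m + n) → (Box.ΔDW m n).card = 2 ^ ((m - 1) * (n - 1))) := by
  obtain ⟨m', rfl⟩ : ∃ m', m = m' + 1 := ⟨m - 1, by omega⟩
  obtain ⟨n', rfl⟩ : ∃ n', n = n' + 1 := ⟨n - 1, by omega⟩
  constructor
  · intro hodd
    rw [Finset.card_eq_zero, Finset.eq_empty_iff_forall_notMem]
    intro d hd
    have hp := DWProof.parity_of_mem hd
    rw [ZMod.natCast_eq_zero_iff] at hp
    obtain ⟨k, hk⟩ := hodd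
    omega
  · intro heven
    have hpar : ((m' + n' : ℕ) : ZMod 2) = 0 := by
      rw [ZMod.natCast_eq_zero_iff]
      obtain ⟨k, hk⟩ := heven
      exact ⟨k - 1, by omega⟩
    rw [DWProof.card_even hpar]
    simp
end

section
/- Let m,n ≥ 3 and let Λ be the torus lattice with n columns and m rows of vertices; let μ be the uniform probability measure on the set Δ_8vx of eight-vertex configurations on Λ. Let EF be the event that a fixed column of m horizontal edges (the horizontal edges whose left endpoints share a fixed first coordinate, one in each row) all point to the left. Then μ(EF) = 2^{−m}. -/
open scoped BigOperators

namespace Toric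

/-- Vertices of the `m × n` torus lattice. Faces are also indexed by `Vtx`
(the face `p` is the unit square whose lower-left corner is `p`). -/
abbrev Vtx (m n : ℕ) := ZMod m × ZMod n

/-- Edges of the torus: `(s, true)` is the horizontal edge from `s` to its right
neighbour, `(s, false)` the vertical edge from `s` to its upper neighbour. -/
abbrev Edge (m n : ℕ) := Vtx m n × Bool

variable (m n : ℕ)

/-- The four edges incident to the vertex `s`, in a fixed order:
right, up, left, down. -/
def star (s : Vtx m n) : Fin 4 → Edge m n :=
  ![(s, true), (s, false), ((s.1 - 1, s.2), true), ((s.1, s.2 - 1), false)]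

/-- The four edges bounding the face `p`, in a fixed order:
bottom, left, top, right. -/
def faceEdge (p : Vtx m n) : Fin 4 → Edge m n :=
  ![(p, true), (p, false), ((p.1, p.2 + 1), true), ((p.1 + 1, p.2), false)]

/-- The set of the four edges incident to the vertex `s` (written `e ∼ s`). -/
def starSet (s : Vtx m n) : Finset (Edge m n) := Finset.univ.image (star m n s)

/-- The set of the four edges bounding the face `p` (written `e ∼ p`). -/
def faceSet (p : Vtx m n) : Finset (Edge m n) := Finset.univ.image (faceEdge m n p)

/-- Arrow configurations: each edge points right/up (`true`) or left/down (`false`). -/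
abbrev AConf (m n : ℕ) := Edge m n → Bool

/-- Which of the four edges at `s` are incoming (point towards `s`). -/
def incVec (d : AConf m n) (s : Vtx m n) : Fin 4 → Bool :=
  ![!d (star m n s 0), !d (star m n s 1), d (star m n s 2), d (star m n s 3)]

/-- Eight-vertex condition: every vertex has an even number of incoming arrows. -/
def IsEightVertex (d : AConf m n) : Prop :=
  ∀ s : Vtx m n, Even (Finset.univ.filter (fun i => incVec m n d s i = true)).card

/-- A local vertex type `η : Fin 4 → Bool` (arrow directions of the four incident
edges, in the order right, up, left, down) is one of the eight allowed vertex types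
I–VIII iff the number of incoming arrows is even. -/
def IsVertexType (η : Fin 4 → Bool) : Prop :=
  Even (Finset.univ.filter
    (fun i => (![!η 0, !η 1, η 2, η 3] : Fin 4 → Bool) i = true)).card

/-- The event `A^η_C` that every vertex of `C` exhibits the type `η` or its
total reversal. -/
def EventA (η : Fin 4 → Bool) (C : Finset (Vtx m n)) (d : AConf m n) : Prop :=
  ∀ s ∈ C, (∀ i, d (star m n s i) = η i) ∨ (∀ i, d (star m n s i) = !η i)

/-- The event `A^{η,ν}_C` that every vertex of `C` exhibits the type `η` or `ν`
or one of their total reversals. -/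
def EventA2 (η ν : Fin 4 → Bool) (C : Finset (Vtx m n)) (d : AConf m n) : Prop :=
  ∀ s ∈ C, (∀ i, d (star m n s i) = η i) ∨ (∀ i, d (star m n s i) = !η i) ∨
    (∀ i, d (star m n s i) = ν i) ∨ (∀ i, d (star m n s i) = !ν i)

/-- A non-contractible cycle of vertices of `C`: a cyclic sequence of vertices of `C`
whose consecutive vertices are nearest neighbours on the torus (with the actual
`ℤ²`-valued unit steps recorded), and whose winding number (the total displacement
in `ℤ²`) is nonzero. -/
structure NCCycle (C : Set (Vtx m n)) where
  len : ℕ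
  len_pos : 0 < len
  v : ℕ → Vtx m n
  step : ℕ → ℤ × ℤ
  mem : ∀ i < len, v i ∈ C
  unit : ∀ i < len,
    step i = (1, 0) ∨ step i = (-1, 0) ∨ step i = (0, 1) ∨ step i = (0, -1)
  succ : ∀ i < len,
    v (i + 1) = ((v i).1 + ((step i).1 : ZMod m), (v i).2 + ((step i).2 : ZMod n))
  closed : v len = v 0
  winding : ∑ i ∈ Finset.range len, step i ≠ 0

/-- Hypothesis (★): either `C` contains no non-contractible cycle, or every
non-contractible cycle in `C` has even length. -/
def StarHyp (C : Set (Vtx m n)) : Prop :=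
  IsEmpty (NCCycle m n C) ∨ ∀ γ : NCCycle m n C, Even γ.len

section torusProb
variable [NeZero m] [NeZero n]

/-- The set `Δ_8vx` of eight-vertex configurations on the torus. -/
noncomputable def Δ8 : Finset (AConf m n) :=
  haveI := Classical.decPred (IsEightVertex m n)
  Finset.univ.filter (IsEightVertex m n)

/-- The uniform eight-vertex probability measure `μ`. -/
noncomputable def prob (P : AConf m n → Prop) : ℝ :=
  haveI := Classical.decPred P
  (((Δ8 m n).filter P).card : ℝ) / ((Δ8 m n).card : ℝ)

end torusProb

/-- Spin configurations `Ω = {-1,+1}^E`. -/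
abbrev SConf (m n : ℕ) := Edge m n → ℤˣ

section matrices
variable [NeZero m] [NeZero n]

/-- Real matrices indexed by the spin configurations (i.e. operators expressed in
the `σ³` product basis). -/
abbrev Mat (m n : ℕ) [NeZero m] [NeZero n] := Matrix (SConf m n) (SConf m n) ℝ

/-- The spin configuration `x^p`, equal to `-1` exactly on the edges of the face `p`. -/
def xconf (p : Vtx m n) : SConf m n := fun e => if e ∈ faceSet m n p then -1 else 1

/-- The spin configuration equal to `-1` exactly on the edges of a set `A`. -/
def aconf (A : Finset (Edge m n)) : SConf m n := fun e => if e ∈ A then -1 else 1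

/-- The plaquette operator `X_p = ∏_{e ∼ p} σ¹_e`: the permutation matrix flipping
the spins on the four edges of `p`. -/
def X (p : Vtx m n) : Mat m n := fun τ ω => if τ = xconf m n p * ω then 1 else 0

/-- `X_A = ∏_{e ∈ A} σ¹_e`: the permutation matrix flipping the spins on `A`. -/
def XA (A : Finset (Edge m n)) : Mat m n := fun τ ω => if τ = aconf m n A * ω then 1 else 0

/-- The product `∏_{p ∈ C} X_p` of plaquette operators: the permutation matrix
flipping the spins around all faces of `C`. -/
def XProd (C : Finset (Vtx m n)) : Mat m n :=
  fun τ ω => if τ = (∏ p ∈ C, xconf m n p) * ω then 1 else 0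

/-- The star operator `Z_s = ∏_{e ∼ s} σ³_e` (a diagonal matrix). -/
def Z (s : Vtx m n) : Mat m n :=
  Matrix.diagonal fun ω => (((∏ e ∈ starSet m n s, ω e : ℤˣ) : ℤ) : ℝ)

/-- `Z_A = ∏_{e ∈ A} σ³_e` (a diagonal matrix). -/
def ZA (A : Finset (Edge m n)) : Mat m n :=
  Matrix.diagonal fun ω => (((∏ e ∈ A, ω e : ℤˣ) : ℤ) : ℝ)

/-- The product `∏_{s ∈ D} Z_s` of star operators (a diagonal matrix). -/
def ZProd (D : Finset (Vtx m n)) : Mat m n :=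
  Matrix.diagonal fun ω => (((∏ s ∈ D, ∏ e ∈ starSet m n s, ω e : ℤˣ) : ℤ) : ℝ)

/-- The toric code Hamiltonian `H = -∑_p Jˣ_p X_p - ∑_s Jᶻ_s Z_s`. -/
noncomputable def H (Jx Jz : Vtx m n → ℝ) : Mat m n :=
  -∑ p : Vtx m n, Jx p • X m n p - ∑ s : Vtx m n, Jz s • Z m n s

/-- Matrix exponential. -/
noncomputable def mexp (A : Mat m n) : Mat m n := NormedSpace.exp A

/-- The equilibrium state `⟨A⟩ = tr(A e^{-H}) / tr(e^{-H})`. -/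
noncomputable def gibbs (Jx Jz : Vtx m n → ℝ) (A : Mat m n) : ℝ :=
  (A * mexp m n (-H m n Jx Jz)).trace / (mexp m n (-H m n Jx Jz)).trace

end matrices

/-- The scalar `I^ε_s(σ) = (1/16) ∏_{i=1}^4 (1 + ε_i σ_i(s))`. -/
noncomputable def Ifun (ε : Fin 4 → ℤˣ) (s : Vtx m n) (σ : SConf m n) : ℝ :=
  (1 / 16 : ℝ) * ∏ i : Fin 4, (1 + ((ε i : ℤ) : ℝ) * ((σ (star m n s i) : ℤ) : ℝ))

/-- The scalar `Ī^ε_s(σ) = (1/16) ∏_{i=1}^4 (1 - ε_i σ_i(s))`. -/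
noncomputable def Ibar (ε : Fin 4 → ℤˣ) (s : Vtx m n) (σ : SConf m n) : ℝ :=
  (1 / 16 : ℝ) * ∏ i : Fin 4, (1 - ((ε i : ℤ) : ℝ) * ((σ (star m n s i) : ℤ) : ℝ))

/-- `I^ε_C(σ) = ∏_{s ∈ C} (I^ε_s(σ) + Ī^ε_s(σ))`: the indicator that around every
vertex of `C` the spins all agree with `ε` or are all opposite. -/
noncomputable def IC (ε : Fin 4 → ℤˣ) (C : Finset (Vtx m n)) (σ : SConf m n) : ℝ :=
  ∏ s ∈ C, (Ifun m n ε s σ + Ibar m n ε s σ)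

/-- `I^{ε,δ}_C(σ) = ∏_{s ∈ C} (I^ε_s(σ) + Ī^ε_s(σ) + I^δ_s(σ) + Ī^δ_s(σ))`. -/
noncomputable def IC2 (ε δ : Fin 4 → ℤˣ) (C : Finset (Vtx m n)) (σ : SConf m n) : ℝ :=
  ∏ s ∈ C, (Ifun m n ε s σ + Ibar m n ε s σ + Ifun m n δ s σ + Ibar m n δ s σ)

section matrices2
variable [NeZero m] [NeZero n]

/-- The (diagonal) operator `Q^ε_C = ∏_{s ∈ C} (P^ε_s + P̄^ε_s)`, where
`P^ε_s = (1/16) ∏_i (1 + ε_i σ³_i(s))` and `P̄^ε_s = (1/16) ∏_i (1 - ε_i σ³_i(s))`. -/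
noncomputable def Q (ε : Fin 4 → ℤˣ) (C : Finset (Vtx m n)) : Mat m n :=
  Matrix.diagonal (IC m n ε C)

/-- The (diagonal) operator `Q^{ε,δ}_C = ∏_{s ∈ C} (P^ε_s + P̄^ε_s + P^δ_s + P̄^δ_s)`. -/
noncomputable def Q2 (ε δ : Fin 4 → ℤˣ) (C : Finset (Vtx m n)) : Mat m n :=
  Matrix.diagonal (IC2 m n ε δ C)

/-- Expectation `E_J[f]` under the four-body Ising measure
`P_J(σ) ∝ exp(∑_s J_s ∏_{e ∼ s} σ_e)`. -/
noncomputable def isingE (J : Vtx m n → ℝ) (f : SConf m n → ℝ) : ℝ :=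
  (∑ σ : SConf m n, f σ *
      Real.exp (∑ s : Vtx m n, J s * (((∏ e ∈ starSet m n s, σ e : ℤˣ) : ℤ) : ℝ))) /
    (∑ σ : SConf m n,
      Real.exp (∑ s : Vtx m n, J s * (((∏ e ∈ starSet m n s, σ e : ℤˣ) : ℤ) : ℝ)))

end matrices2

end Toric

/-!
Every vertex meets exactly two horizontal edges, and both lie in its row. Reversing all
horizontal edges of a row therefore preserves the parity of incoming arrows at every vertex,
so the group `(ZMod m → Bool)` of row reversals acts on `Δ8`. The action is free, and each
orbit contains exactly one configuration whose column `r` is empty: reverse precisely the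
rows whose edge in column `r` points to the right. Hence `|Δ8| = 2^m · |EF|`.
-/

namespace Toric

variable {m n : ℕ}

def IsEmptyColumn (r : ZMod n) (d : AConf n m) : Prop :=
  ∀ y : ZMod m, d ((r, y), true) = false

/-- Reverse the horizontal edges (`e.2 = true`) lying in the rows `y` with `S y = true`. -/
def flipRows (S : ZMod m → Bool) (d : AConf n m) : AConf n m :=
  fun e => xor (e.2 && S e.1.2) (d e)

lemma flipRows_flipRows (S : ZMod m → Bool) (d : AConf n m) :
    flipRows S (flipRows S d) = d := by
  funext e
  simp only [flipRows, ← Bool.xor_assoc, Bool.xor_self, Bool.false_xor]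

lemma flipRows_horizontal (S : ZMod m → Bool) (d : AConf n m) (x : ZMod n) (y : ZMod m) :
    flipRows S d ((x, y), true) = xor (S y) (d ((x, y), true)) := by
  simp only [flipRows, Bool.true_and]

lemma even_card_filter_iff_xor (v : Fin 4 → Bool) :
    Even (Finset.univ.filter (fun i => v i = true)).card ↔
      xor (v 0) (xor (v 1) (xor (v 2) (v 3))) = false := by
  revert v
  decide

lemma isEightVertex_iff_xor (d : AConf n m) :
    IsEightVertex n m d ↔ ∀ s : Vtx n m,
      xor (d (s, true)) (xor (d (s, false))
        (xor (d ((s.1 - 1, s.2), true)) (d ((s.1, s.2 - 1), false)))) = false := by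
  refine forall_congr' fun s => ?_
  rw [even_card_filter_iff_xor]
  simp only [incVec, star, Matrix.cons_val, Bool.xor_not, Bool.not_xor, Bool.not_not]

lemma isEightVertex_flipRows_iff (S : ZMod m → Bool) (d : AConf n m) :
    IsEightVertex n m (flipRows S d) ↔ IsEightVertex n m d := by
  simp only [isEightVertex_iff_xor, flipRows, Bool.false_and, Bool.true_and, Bool.false_xor]
  refine forall_congr' fun s => ?_
  cases S s.2 <;> simp

section torus

variable [NeZero m] [NeZero n]

lemma mem_Δ8 {d : AConf n m} : d ∈ Δ8 n m ↔ IsEightVertex n m d := by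
  simp only [Δ8, Finset.mem_filter, Finset.mem_univ, true_and]

lemma flipRows_mem_Δ8_iff (S : ZMod m → Bool) {d : AConf n m} :
    flipRows S d ∈ Δ8 n m ↔ d ∈ Δ8 n m := by
  rw [mem_Δ8, mem_Δ8, isEightVertex_flipRows_iff]

lemma card_Δ8_eq_card_filter_isEmptyColumn_mul (r : ZMod n)
    [DecidablePred (IsEmptyColumn (m := m) r)] :
    (Δ8 n m).card = ((Δ8 n m).filter (IsEmptyColumn r)).card * 2 ^ m := by
  -- `d ↦ (flipRows S d, S)` with `S` the column `r` of `d` is inverse to `(d, S) ↦ flipRows S d`.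
  let column (d : AConf n m) : ZMod m → Bool := fun y => d ((r, y), true)
  have column_flipRows (S : ZMod m → Bool) {d : AConf n m} (hd : IsEmptyColumn r d) :
      column (flipRows S d) = S := by
    funext y
    simp only [column, flipRows_horizontal, hd y, Bool.xor_false]
  have isEmptyColumn_flipRows (d : AConf n m) : IsEmptyColumn r (flipRows (column d) d) := by
    intro y
    simp only [column, flipRows_horizontal, Bool.xor_self]
  have card_rowSets : 2 ^ m = (Finset.univ : Finset (ZMod m → Bool)).card := by
    rw [Finset.card_univ, Fintype.card_fun, Fintype.card_bool, ZMod.card]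
  rw [card_rowSets, ← Finset.card_product]
  refine Finset.card_nbij' (fun d => (flipRows (column d) d, column d))
    (fun p => flipRows p.2 p.1) ?_ ?_ ?_ ?_
  · intro d hd
    simp only [Finset.coe_product, Set.mem_prod, Finset.mem_coe, Finset.mem_filter,
      flipRows_mem_Δ8_iff, Finset.mem_univ, and_true]
    exact ⟨hd, isEmptyColumn_flipRows d⟩
  · rintro ⟨d, S⟩ hdS
    simp only [Finset.coe_product, Set.mem_prod, Finset.mem_coe, Finset.mem_filter] at hdS
    exact (flipRows_mem_Δ8_iff S).2 hdS.1.1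
  · intro d _
    exact flipRows_flipRows _ d
  · rintro ⟨d, S⟩ hdS
    simp only [Finset.coe_product, Set.mem_prod, Finset.mem_coe, Finset.mem_filter] at hdS
    simp only [column_flipRows S hdS.1.2, flipRows_flipRows]

lemma const_false_mem_Δ8 : (fun _ => false : AConf n m) ∈ Δ8 n m :=
  mem_Δ8.2 <| (isEightVertex_iff_xor _).2 fun _ => rfl

end torus

end Toric

theorem torus_emptiness_formation_general (m n : ℕ) [NeZero m] [NeZero n] (r : ZMod n) :
    Toric.prob n m (fun d => ∀ y : ZMod m, d ((r, y), true) = false) =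
      ((2 : ℝ) ^ m)⁻¹ := by
  classical
  have hEF : ((Toric.Δ8 n m).filter (Toric.IsEmptyColumn r)).Nonempty :=
    ⟨_, Finset.mem_filter.2 ⟨Toric.const_false_mem_Δ8, fun _ => rfl⟩⟩
  change Toric.prob n m (Toric.IsEmptyColumn r) = _
  rw [Toric.prob, Finset.filter_congr_decidable, Toric.card_Δ8_eq_card_filter_isEmptyColumn_mul r]
  push_cast
  rw [← div_div, div_self (by exact_mod_cast hEF.card_pos.ne'), one_div]

/-- Emptiness formation probability on the torus with `n` columns
and `m` rows: the probability under the uniform eight-vertex measure that a fixed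
column of `m` horizontal edges (those whose left endpoints have first coordinate `r`)
all point to the left is `2^{-m}`. -/
theorem torus_emptiness_formation (m n : ℕ) [NeZero m] [NeZero n]
    (hm : 3 ≤ m) (hn : 3 ≤ n) (r : ZMod n) :
    Toric.prob n m (fun d => ∀ y : ZMod m, d ((r, y), true) = false) =
      ((2 : ℝ) ^ m)⁻¹ :=
  torus_emptiness_formation_general m n r
end
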